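/- Let X be a real-valued random variable with finite fourth moment and E[|X|] > 0. Then Var[X^2] / (E[X^2])^2 ≥ Var[|X|] / (E[|X|])^2. -/

import Mathlib

/-!
With `a = E|X|`, `b = E[X²]`, `c = E[X⁴]` we have `Var|X| = b - a²` and `Var[X²] = c - b²`, so the
claim is `b / a² ≤ c / b²`, i.e. Lyapunov's inequality `b³ ≤ a² c`. The latter follows by
integrating the weighted AM–GM bound `3 s² x² ≤ 2 s³ |x| + x⁴` and choosing `s = b / a`.
-/

open MeasureTheory ProbabilityTheory

/-- Weighted AM–GM for `x² = (s|x|)^(2/3) (x⁴/s²)^(1/3)`, cleared of denominators: the difference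
of the two sides is `|x| (|x| - s)² (|x| + 2s)`. -/
lemma three_mul_sq_mul_sq_le (s x : ℝ) (hs : 0 ≤ s) :
    3 * s ^ 2 * x ^ 2 ≤ 2 * s ^ 3 * |x| + x ^ 4 := by
  have hfactor : 0 ≤ |x| * (|x| - s) ^ 2 * (|x| + 2 * s) := by positivity
  rw [← sq_abs x, ← Even.pow_abs (by norm_num : Even 4) x]
  nlinarith [hfactor]

section

variable {α : Type*} {m : MeasurableSpace α} {μ : Measure α}

theorem integral_sq_pow_three_le {f : α → ℝ} (hf : Integrable f μ)
    (hf2 : Integrable (fun x ↦ f x ^ 2) μ) (hf4 : Integrable (fun x ↦ f x ^ 4) μ)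
    (hpos : 0 < ∫ x, |f x| ∂μ) :
    (∫ x, f x ^ 2 ∂μ) ^ 3 ≤ (∫ x, |f x| ∂μ) ^ 2 * ∫ x, f x ^ 4 ∂μ := by
  set a := ∫ x, |f x| ∂μ
  set b := ∫ x, f x ^ 2 ∂μ
  set c := ∫ x, f x ^ 4 ∂μ
  have hs : 0 ≤ b / a := div_nonneg (integral_nonneg fun x ↦ sq_nonneg _) hpos.le
  have hyoung : 3 * (b / a) ^ 2 * b ≤ 2 * (b / a) ^ 3 * a + c :=
    calc 3 * (b / a) ^ 2 * b = ∫ x, 3 * (b / a) ^ 2 * f x ^ 2 ∂μ :=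
          (integral_const_mul _ _).symm
      _ ≤ ∫ x, (2 * (b / a) ^ 3 * |f x| + f x ^ 4) ∂μ :=
          integral_mono (hf2.const_mul _) ((hf.abs.const_mul _).add hf4)
            fun x ↦ three_mul_sq_mul_sq_le (b / a) (f x) hs
      _ = 2 * (b / a) ^ 3 * a + c := by
          rw [integral_add (hf.abs.const_mul _) hf4, integral_const_mul]
  have h1 : (b / a) ^ 2 * b = b ^ 3 / a ^ 2 := by field_simp
  have h2 : (b / a) ^ 3 * a = b ^ 3 / a ^ 2 := by field_simp
  rw [mul_assoc, h1, mul_assoc, h2] at hyoung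
  rw [← div_le_iff₀' (by positivity)]
  linarith

variable {X : α → ℝ}

lemma MeasureTheory.MemLp.integrable_pow_four (hX : MemLp X 4 μ) :
    Integrable (fun ω ↦ X ω ^ 4) μ := by
  simpa [Even.pow_abs (by norm_num : Even 4)] using hX.integrable_norm_pow (p := 4) four_ne_zero

variable [IsProbabilityMeasure μ]

lemma variance_abs_eq (hX : MemLp X 2 μ) :
    variance (fun ω ↦ |X ω|) μ = ∫ ω, X ω ^ 2 ∂μ - (∫ ω, |X ω| ∂μ) ^ 2 := by
  rw [variance_eq_sub (X := fun ω ↦ |X ω|) hX.abs]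
  simp only [Pi.pow_apply, sq_abs]

lemma variance_sq_eq (hX : MemLp X 4 μ) :
    variance (fun ω ↦ X ω ^ 2) μ = ∫ ω, X ω ^ 4 ∂μ - (∫ ω, X ω ^ 2 ∂μ) ^ 2 := by
  have hsq : MemLp (fun ω ↦ X ω ^ 2) 2 μ :=
    (memLp_two_iff_integrable_sq (hX.1.pow 2)).2 <| by
      simpa only [Pi.pow_apply, ← pow_mul] using hX.integrable_pow_four
  rw [variance_eq_sub hsq]
  simp only [Pi.pow_apply, ← pow_mul]

end

/-- If `X` is a real random variable with finite fourth moment and `E[|X|] > 0`, then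
`Var[X²]/(E[X²])² ≥ Var[|X|]/(E[|X|])²`. -/
theorem var_sq_ratio_ge {Ω : Type*} [MeasureSpace Ω]
    [IsProbabilityMeasure (ℙ : Measure Ω)] (X : Ω → ℝ)
    (h4 : MemLp X 4 ℙ) (hpos : 0 < ∫ ω, |X ω|) :
    variance (fun ω => |X ω|) ℙ / (∫ ω, |X ω|) ^ 2 ≤
      variance (fun ω => (X ω) ^ 2) ℙ / (∫ ω, (X ω) ^ 2) ^ 2 := by
  have h2 : MemLp X 2 ℙ := h4.mono_exponent (by norm_num)
  have hlyapunov := integral_sq_pow_three_le (h2.integrable one_le_two) h2.integrable_sq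
    h4.integrable_pow_four hpos
  have hjensen : (∫ ω, |X ω|) ^ 2 ≤ ∫ ω, X ω ^ 2 := by
    linarith [variance_abs_eq h2 ▸ variance_nonneg (fun ω ↦ |X ω|) ℙ]
  have hb : 0 < ∫ ω, X ω ^ 2 := (pow_pos hpos 2).trans_le hjensen
  rw [variance_abs_eq h2, variance_sq_eq h4, sub_div, sub_div, div_self (pow_pos hpos 2).ne',
    div_self (pow_pos hb 2).ne', sub_le_sub_iff_right,
    div_le_div_iff₀ (pow_pos hpos 2) (pow_pos hb 2)]
  nlinarith [hlyapunov]
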